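/- In the setting above (A commutative ring, D an A-coalgebra, x an A-linear functional satisfying the exactness and local nilpotence conditions, with canonical elements βₙ ∈ D), define functionals xⁿ : D → A for n ≥ 0 by x⁰ = ε and ⟨d, x^{n}⟩ = ⟨d ∩ x, x^{n−1}⟩. Then ⟨βᵢ, x^{j}⟩ = 1 if j = i − 1 and ⟨βᵢ, x^{j}⟩ = 0 otherwise; consequently, every d ∈ D satisfies d = Σ_{i ≥ 1} ⟨d, x^{i−1}⟩ βᵢ, where the sum is finite because ⟨d, x^{i−1}⟩ = 0 for all sufficiently large i. -/
import Mathlib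


open TensorProduct

/-- The cap product `d ∩ x = (1 ⊗ x)(Δ d)`, as a linear endomorphism of `D`. -/
noncomputable def stmt13Cap {A D : Type*} [CommRing A] [AddCommGroup D] [Module A D]
    [Coalgebra A D] (x : D →ₗ[A] A) : D →ₗ[A] D :=
  (TensorProduct.rid A D).toLinearMap ∘ₗ (LinearMap.lTensor D x) ∘ₗ Coalgebra.comul

/-- The iterated functional `xⁿ`, with `x⁰ = ε` and `⟨d, xⁿ⟩ = ⟨d ∩ x, x^{n-1}⟩`,
i.e. `⟨d, xⁿ⟩ = ε((∩x)ⁿ d)`. -/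
noncomputable def stmt13XPow {A D : Type*} [CommRing A] [AddCommGroup D] [Module A D]
    [Coalgebra A D] (x : D →ₗ[A] A) (n : ℕ) : D →ₗ[A] A :=
  Coalgebra.counit ∘ₗ (stmt13Cap x ^ n)

/-- Setting as in the previous statements.  Then `⟨βᵢ, xʲ⟩ = 1` if `j = i - 1` and `0`
otherwise, and every `d ∈ D` satisfies `d = Σ_{i ≥ 1} ⟨d, x^{i-1}⟩ βᵢ`, the sum being
finite since `⟨d, x^{i-1}⟩ = 0` for all sufficiently large `i`. -/
theorem stmt_13 {A D : Type*} [CommRing A] [AddCommGroup D] [Module A D] [Coalgebra A D]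
    (hcocomm : ∀ d : D, TensorProduct.comm A D D (Coalgebra.comul d) = Coalgebra.comul d)
    (x : D →ₗ[A] A) (β : ℕ → D)
    (hβε : Coalgebra.counit (R := A) (β 1) = 1) (hβx : stmt13Cap x (β 1) = 0)
    (hinj : Function.Injective fun a : A => a • β 1)
    (hker : ∀ d : D, stmt13Cap x d = 0 ↔ ∃ a : A, d = a • β 1)
    (hsurj : Function.Surjective (stmt13Cap x))
    (hrec : ∀ n, 1 ≤ n → stmt13Cap x (β (n + 1)) = β n)
    (hε : ∀ n, 2 ≤ n → Coalgebra.counit (R := A) (β n) = 0)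
    (hnil : ∀ d : D, ∃ n : ℕ, (stmt13Cap x ^ n) d = 0) :
    (∀ i j : ℕ, 1 ≤ i →
      stmt13XPow x j (β i) = if j = i - 1 then (1 : A) else 0) ∧
    ∀ d : D, ∃ N : ℕ,
      (∀ i, N ≤ i → stmt13XPow x i d = 0) ∧
      d = ∑ i ∈ Finset.range N, stmt13XPow x i d • β (i + 1) := by
  classical
  set f := stmt13Cap x with hf
  have hpow : ∀ k i : ℕ, 1 ≤ i → (f ^ k) (β i) = if k < i then β (i - k) else 0 := by
    intro k
    induction k with
    | zero => intro i hi; rw [if_pos (by omega)]; simp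
    | succ k ih =>
      intro i hi
      have hstep : (f ^ (k + 1)) (β i) = f ((f ^ k) (β i)) := by rw [pow_succ']; rfl
      rw [hstep, ih i hi]
      by_cases hk : k < i
      · rw [if_pos hk]
        rcases Nat.lt_or_ge (k + 1) i with h1 | h1
        · have h2 : 1 ≤ i - k - 1 := by omega
          have hr := hrec (i - k - 1) h2
          have he : i - k - 1 + 1 = i - k := by omega
          rw [he] at hr
          have hee : i - k - 1 = i - (k + 1) := by omega
          rw [hr, hee, if_pos h1]
        · have he : i - k = 1 := by omega
          rw [he, hβx, if_neg (by omega)]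
      · rw [if_neg hk, map_zero, if_neg (by omega)]
  have hx : ∀ (n : ℕ) (d : D), stmt13XPow x n d = Coalgebra.counit ((f ^ n) d) := by
    intro n d; rfl
  have part1 : ∀ i j : ℕ, 1 ≤ i →
      stmt13XPow x j (β i) = if j = i - 1 then (1 : A) else 0 := by
    intro i j hi
    rw [hx, hpow j i hi]
    by_cases hj : j < i
    · rw [if_pos hj]
      by_cases hji : j = i - 1
      · rw [if_pos hji]
        have : i - j = 1 := by omega
        rw [this, hβε]
      · rw [if_neg hji]
        exact hε (i - j) (by omega)
    · rw [if_neg hj, map_zero, if_neg (by omega)]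
  refine ⟨part1, ?_⟩
  have main : ∀ (N : ℕ) (d : D), (f ^ N) d = 0 →
      d = ∑ i ∈ Finset.range N, stmt13XPow x i d • β (i + 1) := by
    intro N
    induction N with
    | zero => intro d hd; simpa using hd
    | succ N ih =>
      intro d hd
      have hfd : (f ^ N) (f d) = 0 := by
        have hstep : (f ^ (N + 1)) d = (f ^ N) (f d) := by rw [pow_succ]; rfl
        rw [← hstep, hd]
      have hcd : f d = ∑ i ∈ Finset.range N, stmt13XPow x (i + 1) d • β (i + 1) := by
        have h := ih (f d) hfd
        rw [h]
        refine Finset.sum_congr rfl fun i _ => ?_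
        congr 1
      have hfe : f (d - ∑ i ∈ Finset.range (N + 1), stmt13XPow x i d • β (i + 1)) = 0 := by
        rw [map_sub, map_sum]
        simp only [map_smul]
        rw [Finset.sum_range_succ']
        rw [show f (β (0 + 1)) = 0 from hβx, smul_zero, add_zero]
        have hterm : ∀ i ∈ Finset.range N,
            stmt13XPow x (i + 1) d • f (β (i + 1 + 1)) =
            stmt13XPow x (i + 1) d • β (i + 1) := by
          intro i _
          rw [hrec (i + 1) (by omega)]
        rw [Finset.sum_congr rfl hterm, ← hcd, sub_self]
      obtain ⟨a, ha⟩ := (hker _).mp hfe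
      have hεe : Coalgebra.counit (R := A)
          (d - ∑ i ∈ Finset.range (N + 1), stmt13XPow x i d • β (i + 1)) = 0 := by
        rw [map_sub, map_sum]
        simp only [map_smul]
        rw [Finset.sum_range_succ']
        have h0 : stmt13XPow x 0 d • Coalgebra.counit (R := A) (β (0 + 1)) =
            Coalgebra.counit (R := A) d := by
          rw [show (0:ℕ) + 1 = 1 from rfl, hβε, hx]
          simp [smul_eq_mul]
        rw [h0]
        have hterm : ∀ i ∈ Finset.range N,
            stmt13XPow x (i + 1) d • Coalgebra.counit (R := A) (β (i + 1 + 1)) = 0 := by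
          intro i _
          rw [hε (i + 1 + 1) (by omega), smul_zero]
        rw [Finset.sum_congr rfl hterm]
        simp
      have ha0 : a = 0 := by
        rw [ha, map_smul, hβε, smul_eq_mul, mul_one] at hεe
        exact hεe
      have he0 : d - ∑ i ∈ Finset.range (N + 1), stmt13XPow x i d • β (i + 1) = 0 := by
        rw [ha, ha0, zero_smul]
      exact sub_eq_zero.mp he0
  intro d
  obtain ⟨N, hN⟩ := hnil d
  refine ⟨N, fun i hi => ?_, main N d hN⟩
  rw [hx]
  have : (f ^ i) d = 0 := by
    obtain ⟨k, rfl⟩ := Nat.exists_eq_add_of_le hi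
    rw [add_comm, pow_add, Module.End.mul_apply, hN, map_zero]
  rw [this, map_zero]
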